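/- arXiv:1502.02812 — 3 statements merged into one kernel-verified Lean document; each statement's English description precedes it below -/
import Mathlib

section
/- For n ≥ 3, the formal power series P(z) = Σ_{k≥0} δ_k z^k with δ_0 = δ_1 = 0, δ_2 = n + (n+2)(n+1)n(n-3)/12, and δ_k = (n(k-1)/2)·C(n+k-1, k+1) for k ≥ 3, satisfies the identity z(1-z)^n · P(z) = n(1-z)^n + C(n,2)(1-z^2) z (1-z)^n - (n - C(n+1,2) z) as formal power series; in particular P(z) is a rational function with a pole at z = 1 of order n. -/
open PowerSeries

/-!
Writing `Q = (1 - z)⁻ⁿ = Σ C(n+m-1, m) zᵐ`, the closed formula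
`δ k = (n(k-1)/2) C(n+k-1, k+1)`, read for every `k`, satisfies
`δ k = C(n+1, 2) [zᵏ] Q - n [zᵏ⁺¹] Q`, i.e. its series `P₀` satisfies
`z P₀ = C(n+1, 2) z Q - n (Q - 1)`. The actual `δ` differs from the closed formula
only in degrees `0` and `2`, by `C(n, 2)(1 - z²)`; multiplying by `(1 - z)ⁿ` gives the claim.
-/

namespace PowerSeries

theorem invOneSubPow_val_eq_mk_choose (S : Type*) [CommRing S] (d : ℕ) :
    (invOneSubPow S d).val = mk fun m => ((d + m - 1).choose m : S) := by
  cases d with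
  | zero =>
    -- truncated subtraction: `(m - 1).choose m` is `1` at `m = 0` and `0` otherwise
    rw [invOneSubPow_zero]
    ext m
    cases m <;> simp [coeff_one]
  | succ d =>
    rw [invOneSubPow_val_succ_eq_mk_add_choose]
    ext m
    rw [coeff_mk, coeff_mk, Nat.add_right_comm d 1 m, Nat.add_sub_cancel, Nat.choose_symm_add]

theorem one_sub_pow_mul_mk_choose (S : Type*) [CommRing S] (d : ℕ) :
    (1 - X) ^ d * mk (fun m => ((d + m - 1).choose m : S)) = 1 := by
  rw [← invOneSubPow_val_eq_mk_choose, ← invOneSubPow_inv_eq_one_sub_pow]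
  exact (invOneSubPow S d).inv_val

end PowerSeries

/-- The closed formula for `δ k`, valid for `k ≥ 3`. -/
def poincareCoeff (n k : ℕ) : ℚ :=
  n * (k - 1) / 2 * (n + k - 1).choose (k + 1)

theorem poincareCoeff_eq (n k : ℕ) :
    poincareCoeff n k =
      (n + 1).choose 2 * (n + k - 1).choose k - n * (n + k).choose (k + 1) := by
  unfold poincareCoeff
  cases n with
  | zero => simp
  | succ n =>
    rw [Nat.add_right_comm n 1 k, Nat.add_sub_cancel]
    have lower : ((n + k).choose (k + 1) : ℚ) * (k + 1) = (n + k).choose k * n := by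
      exact_mod_cast (Nat.choose_succ_right_eq (n + k) k).trans (by rw [Nat.add_sub_cancel])
    have upper : ((n + k + 1).choose (k + 1) : ℚ) * (k + 1) = (n + k).choose k * (n + k + 1) := by
      exact_mod_cast (Nat.add_one_mul_choose_eq (n + k) k).symm.trans (mul_comm _ _)
    have hk : (k + 1 : ℚ) ≠ 0 := by positivity
    apply mul_right_cancel₀ hk
    push_cast [Nat.cast_choose_two]
    linear_combination (↑n + 1) * (↑k - 1) / 2 * lower + (↑n + 1) * upper

theorem X_mul_mk_poincareCoeff (n : ℕ) :
    X * mk (poincareCoeff n) =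
      C ((n + 1).choose 2 : ℚ) * X * mk (fun m => ((n + m - 1).choose m : ℚ)) -
        C (n : ℚ) * (mk (fun m => ((n + m - 1).choose m : ℚ)) - 1) := by
  ext k
  cases k with
  | zero => simp
  | succ k =>
    simp only [mul_assoc, map_sub, coeff_C_mul, coeff_succ_X_mul, coeff_one, coeff_mk,
      if_neg k.succ_ne_zero, sub_zero]
    rw [← add_assoc, Nat.add_sub_cancel, poincareCoeff_eq]

theorem stmt4_general (n : ℕ) (δ : ℕ → ℚ) (h0 : δ 0 = 0) (h1 : δ 1 = 0)
    (h2 : δ 2 = (n : ℚ) + ((n : ℚ) + 2) * ((n : ℚ) + 1) * (n : ℚ) * ((n : ℚ) - 3) / 12)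
    (h : ∀ k : ℕ, 3 ≤ k →
      δ k = ((n : ℚ) * ((k : ℚ) - 1) / 2) * (Nat.choose (n + k - 1) (k + 1) : ℚ)) :
    X * (1 - X) ^ n * PowerSeries.mk δ =
      PowerSeries.C (n : ℚ) * (1 - X) ^ n +
        PowerSeries.C (Nat.choose n 2 : ℚ) * (1 - X ^ 2) * X * (1 - X) ^ n -
        (PowerSeries.C (n : ℚ) - PowerSeries.C (Nat.choose (n + 1) 2 : ℚ) * X) := by
  have low_degrees : mk δ = mk (poincareCoeff n) + C (n.choose 2 : ℚ) * (1 - X ^ 2) := by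
    ext k
    simp only [coeff_mk, map_add, coeff_C_mul, map_sub, coeff_one, coeff_X_pow]
    match k with
    | 0 =>
      simp only [h0, poincareCoeff_eq, Nat.cast_choose_two, Nat.cast_add, Nat.cast_one,
        add_sub_cancel_right, add_zero, Nat.choose_zero_right, mul_one, zero_add,
        Nat.choose_one_right, ↓reduceIte, OfNat.zero_ne_ofNat, sub_zero]
      ring
    | 1 => simp [h1, poincareCoeff]
    | 2 =>
      have h3 : ((n + 2).choose 3 : ℚ) * 3 = (n + 2).choose 2 * n := by
        exact_mod_cast (Nat.choose_succ_right_eq (n + 2) 2).trans (by rw [Nat.add_sub_cancel])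
      simp only [h2, poincareCoeff_eq, Nat.add_one_sub_one, Nat.reduceAdd, OfNat.ofNat_ne_zero,
        ↓reduceIte, zero_sub, mul_neg, mul_one]
      push_cast [Nat.cast_choose_two] at h3 ⊢
      linear_combination (n : ℚ) / 3 * h3
    | k + 3 => simp [h (k + 3) (by omega), poincareCoeff]
  rw [low_degrees]
  linear_combination (1 - X) ^ n * X_mul_mk_poincareCoeff n
    + (C ((n + 1).choose 2 : ℚ) * X - C (n : ℚ)) * one_sub_pow_mul_mk_choose ℚ n

/-- For `n ≥ 3`, the Poincaré series `P(z) = Σ δ_k z^k` of moduli of Riemannian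
metrics, with `δ 0 = δ 1 = 0`, `δ 2 = n + (n+2)(n+1)n(n-3)/12` and
`δ k = (n(k-1)/2)·C(n+k-1,k+1)` for `k ≥ 3`, satisfies
`z(1-z)^n P(z) = n(1-z)^n + C(n,2)(1-z²) z (1-z)^n - (n - C(n+1,2) z)`
as formal power series over `ℚ`; in particular `P` is rational with a pole of
order `n` at `z = 1`. -/
theorem stmt4 (n : ℕ) (hn : 3 ≤ n) (δ : ℕ → ℚ) (h0 : δ 0 = 0) (h1 : δ 1 = 0)
    (h2 : δ 2 = (n : ℚ) + ((n : ℚ) + 2) * ((n : ℚ) + 1) * (n : ℚ) * ((n : ℚ) - 3) / 12)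
    (h : ∀ k : ℕ, 3 ≤ k →
      δ k = ((n : ℚ) * ((k : ℚ) - 1) / 2) * (Nat.choose (n + k - 1) (k + 1) : ℚ)) :
    X * (1 - X) ^ n * PowerSeries.mk δ =
      PowerSeries.C (n : ℚ) * (1 - X) ^ n +
        PowerSeries.C (Nat.choose n 2 : ℚ) * (1 - X ^ 2) * X * (1 - X) ^ n -
        (PowerSeries.C (n : ℚ) - PowerSeries.C (Nat.choose (n + 1) 2 : ℚ) * X) :=
  stmt4_general n δ h0 h1 h2 h
end

section
/- For n ≥ 3, the coefficient of z^2 in the Taylor expansion at z=0 of the rational function P(z) = n/z + C(n,2)(1-z²) - (1/(1-z)^n)(n/z - C(n+1,2)) equals n + (n+2)(n+1)n(n-3)/12. -/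
open PowerSeries

theorem Nat.cast_choose_three {K : Type*} [DivisionRing K] [CharZero K] (a : ℕ) :
    (a.choose 3 : K) = a * (a - 1) * (a - 2) / 6 := by
  rw [Nat.cast_choose_eq_descPochhammer_div]
  simp [descPochhammer_succ_eval, Nat.factorial]

theorem PowerSeries.coeff_three_add_sub_linear_mul {R : Type*} [CommRing R] (a b c : R)
    (G : R⟦X⟧) :
    coeff 3 (C a + C c * (X - X ^ 3) - (C a - C b * X) * G) =
      -c - a * coeff 3 G + b * coeff 2 G := by
  rw [sub_mul, mul_assoc]
  simp only [map_sub, map_add, coeff_C_mul, coeff_C, coeff_X, coeff_X_pow]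
  rw [show (3 : ℕ) = 2 + 1 from rfl, coeff_succ_X_mul]
  simp only [Nat.reduceAdd, OfNat.ofNat_ne_zero, ↓reduceIte, OfNat.ofNat_ne_one]
  ring

theorem stmt6_general (n : ℕ)
    (G : PowerSeries ℚ) (hG : G = PowerSeries.mk fun k => (Nat.choose (n + k - 1) k : ℚ)) :
    PowerSeries.coeff (R := ℚ) 3
      (PowerSeries.C (R := ℚ) (n : ℚ) +
        PowerSeries.C (R := ℚ) (Nat.choose n 2 : ℚ) * (X - X ^ 3) -
        (PowerSeries.C (R := ℚ) (n : ℚ) - PowerSeries.C (R := ℚ) (Nat.choose (n + 1) 2 : ℚ) * X) * G)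
      = (n : ℚ) + ((n : ℚ) + 2) * ((n : ℚ) + 1) * (n : ℚ) * ((n : ℚ) - 3) / 12 := by
  subst hG
  rw [coeff_three_add_sub_linear_mul, coeff_mk, coeff_mk, Nat.add_sub_assoc (by norm_num),
    Nat.add_sub_assoc (by norm_num), Nat.cast_choose_three, Nat.cast_choose_two,
    Nat.cast_choose_two]
  push_cast
  ring

/-- For `n ≥ 3`, the coefficient of `z²` in the Taylor expansion at `0` of
`P(z) = n/z + C(n,2)(1-z²) - (1/(1-z)^n)(n/z - C(n+1,2))` equals
`n + (n+2)(n+1)n(n-3)/12`.  Using `1/(1-z)^n = Σ C(n+k-1,k) z^k`, the coefficient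
of `z²` in `P` is the coefficient of `z³` in `z·P(z)`, i.e. in
`n + C(n,2)(z - z³) - (n - C(n+1,2) z)·Σ C(n+k-1,k) z^k`. -/
theorem stmt6 (n : ℕ) (hn : 3 ≤ n)
    (G : PowerSeries ℚ) (hG : G = PowerSeries.mk fun k => (Nat.choose (n + k - 1) k : ℚ)) :
    PowerSeries.coeff (R := ℚ) 3
      (PowerSeries.C (R := ℚ) (n : ℚ) +
        PowerSeries.C (R := ℚ) (Nat.choose n 2 : ℚ) * (X - X ^ 3) -
        (PowerSeries.C (R := ℚ) (n : ℚ) - PowerSeries.C (R := ℚ) (Nat.choose (n + 1) 2 : ℚ) * X) * G)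
      = (n : ℚ) + ((n : ℚ) + 2) * ((n : ℚ) + 1) * (n : ℚ) * ((n : ℚ) - 3) / 12 :=
  stmt6_general n G hG
end

section
/- For every n ≥ 2, Thomas's sequence s_k (with s_k = n + (n²(k-1) - n(k+1))/(2(k+1))·C(n+k,k) for n ≥ 3, or s_k = (k+1)(k-2)/2 + δ_{k,2} for n = 2) is monotone nondecreasing in k for k ≥ 2 and tends to infinity; in particular the algebra of scalar differential invariants of Riemannian metrics is infinitely generated as a plain (non-differential) algebra. -/
/-!
For `n = 2` the sequence is an explicit quadratic in `k`. For `n ≥ 3` write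
`s k = n + c k * C(n+k, k)`; the coefficient is `c k = n(n-1)/2 - n²/(k+1)`, which is
nondecreasing in `k` and nonnegative for `k ≥ 2`, and the binomial factor is nondecreasing, so
`s` is nondecreasing. Since `C(n+k, k) ≥ k + 1`, moreover `s k ≥ n + c k (k+1) = n(n-1)(k-1)/2`.
In both cases `s k ≥ k - 2`, whence `s → ∞`.
-/

open Filter

def thomasTwo (k : ℕ) : ℚ :=
  ((k : ℚ) + 1) * ((k : ℚ) - 2) / 2 + (if k = 2 then 1 else 0)

def thomasCoeff (n k : ℕ) : ℚ :=
  ((n : ℚ) ^ 2 * ((k : ℚ) - 1) - (n : ℚ) * ((k : ℚ) + 1)) / (2 * ((k : ℚ) + 1))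

def thomasHigh (n k : ℕ) : ℚ :=
  (n : ℚ) + thomasCoeff n k * (Nat.choose (n + k) k : ℚ)

lemma thomasTwo_le_succ {k : ℕ} (hk : 2 ≤ k) : thomasTwo k ≤ thomasTwo (k + 1) := by
  unfold thomasTwo
  rw [if_neg (show k + 1 ≠ 2 by omega)]
  have : (2 : ℚ) ≤ k := by exact_mod_cast hk
  push_cast
  split_ifs <;> nlinarith

lemma sub_two_le_thomasTwo {k : ℕ} (hk : 2 ≤ k) : (k : ℚ) - 2 ≤ thomasTwo k := by
  unfold thomasTwo
  have : (2 : ℚ) ≤ k := by exact_mod_cast hk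
  split_ifs <;> nlinarith

lemma thomasCoeff_eq (n k : ℕ) :
    thomasCoeff n k = (n : ℚ) * (n - 1) / 2 - (n : ℚ) ^ 2 / (k + 1) := by
  unfold thomasCoeff
  field_simp
  ring

lemma thomasCoeff_mono (n : ℕ) : Monotone (thomasCoeff n) := by
  intro k l hkl
  simp only [thomasCoeff_eq]
  gcongr

lemma thomasCoeff_nonneg {n k : ℕ} (hn : 3 ≤ n) (hk : 2 ≤ k) : 0 ≤ thomasCoeff n k := by
  refine le_trans ?_ (thomasCoeff_mono n hk)
  rw [thomasCoeff_eq]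
  have : (3 : ℚ) ≤ n := by exact_mod_cast hn
  norm_num
  nlinarith

lemma add_thomasCoeff_mul_succ (n k : ℕ) :
    (n : ℚ) + thomasCoeff n k * (k + 1) = (n : ℚ) * (n - 1) * (k - 1) / 2 := by
  rw [thomasCoeff_eq]
  field_simp
  ring

lemma choose_add_le_choose_add_succ (n k : ℕ) :
    Nat.choose (n + k) k ≤ Nat.choose (n + (k + 1)) (k + 1) := by
  rw [← add_assoc, Nat.choose_succ_succ]
  exact Nat.le_add_right _ _

lemma succ_le_choose_add {n : ℕ} (hn : 1 ≤ n) (k : ℕ) : k + 1 ≤ Nat.choose (n + k) k := by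
  calc k + 1 = Nat.choose (k + 1) k := (Nat.choose_succ_self_right k).symm
    _ ≤ Nat.choose (n + k) k := Nat.choose_le_choose k (by omega)

lemma thomasHigh_le_succ {n k : ℕ} (hn : 3 ≤ n) (hk : 2 ≤ k) :
    thomasHigh n k ≤ thomasHigh n (k + 1) := by
  unfold thomasHigh
  gcongr
  · exact thomasCoeff_nonneg hn (by omega)
  · exact thomasCoeff_mono n k.le_succ
  · exact choose_add_le_choose_add_succ n k

lemma sub_two_le_thomasHigh {n k : ℕ} (hn : 3 ≤ n) (hk : 2 ≤ k) :
    (k : ℚ) - 2 ≤ thomasHigh n k := by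
  have hC : (k : ℚ) + 1 ≤ Nat.choose (n + k) k := by
    exact_mod_cast succ_le_choose_add (by omega) k
  have hn' : (3 : ℚ) ≤ n := by exact_mod_cast hn
  have hk' : (2 : ℚ) ≤ k := by exact_mod_cast hk
  have hprod : 0 ≤ ((n : ℚ) - 3) * (n + 2) * (k - 1) :=
    mul_nonneg (mul_nonneg (by linarith) (by positivity)) (by linarith)
  calc (k : ℚ) - 2 ≤ (n : ℚ) * (n - 1) * (k - 1) / 2 := by linarith
    _ = n + thomasCoeff n k * (k + 1) := (add_thomasCoeff_mul_succ n k).symm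
    _ ≤ thomasHigh n k := by
      unfold thomasHigh
      gcongr
      exact thomasCoeff_nonneg hn hk

lemma le_succ_and_tendsto_atTop_of_eq {s t : ℕ → ℚ} {m : ℕ} {c : ℚ}
    (hst : ∀ k, m ≤ k → s k = t k) (ht_mono : ∀ k, m ≤ k → t k ≤ t (k + 1))
    (ht_ge : ∀ k, m ≤ k → (k : ℚ) - c ≤ t k) :
    (∀ k, m ≤ k → s k ≤ s (k + 1)) ∧ Tendsto s atTop atTop := by
  refine ⟨fun k hk => ?_, ?_⟩
  · rw [hst k hk, hst (k + 1) (by omega)]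
    exact ht_mono k hk
  · refine tendsto_atTop_mono' _ ?_
      (tendsto_atTop_add_const_right _ (-c) (tendsto_natCast_atTop_atTop (R := ℚ)))
    filter_upwards [eventually_ge_atTop m] with k hk
    rw [hst k hk, ← sub_eq_add_neg]
    exact ht_ge k hk

/-- For every `n ≥ 2`, Thomas's sequence `s_k` (given for `n = 2` by
`s k = (k+1)(k-2)/2 + [k=2]` and for `n ≥ 3` by
`s k = n + (n²(k-1)-n(k+1))/(2(k+1))·C(n+k,k)`, for `k ≥ 2`) is monotone
nondecreasing in `k` for `k ≥ 2` and tends to infinity; in particular the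
algebra of scalar differential invariants of Riemannian metrics is infinitely
generated as a plain algebra. -/
theorem stmt16 (n : ℕ) (hn : 2 ≤ n) (s : ℕ → ℚ)
    (hs2 : n = 2 → ∀ k : ℕ, 2 ≤ k →
      s k = ((k : ℚ) + 1) * ((k : ℚ) - 2) / 2 + (if k = 2 then 1 else 0))
    (hs3 : 3 ≤ n → ∀ k : ℕ, 2 ≤ k →
      s k = (n : ℚ) + (((n : ℚ) ^ 2 * ((k : ℚ) - 1) - (n : ℚ) * ((k : ℚ) + 1)) /
        (2 * ((k : ℚ) + 1))) * (Nat.choose (n + k) k : ℚ)) :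
    (∀ k : ℕ, 2 ≤ k → s k ≤ s (k + 1)) ∧
      Filter.Tendsto s Filter.atTop Filter.atTop := by
  obtain rfl | hn3 := hn.eq_or_lt
  · exact le_succ_and_tendsto_atTop_of_eq (t := thomasTwo) (hs2 rfl)
      (fun _ => thomasTwo_le_succ) (fun _ => sub_two_le_thomasTwo)
  · exact le_succ_and_tendsto_atTop_of_eq (t := thomasHigh n) (hs3 hn3)
      (fun _ => thomasHigh_le_succ hn3) (fun _ => sub_two_le_thomasHigh hn3)
end
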